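/- arXiv:1811.00230 — 6 statements merged into one kernel-verified Lean document; each statement's English description precedes it below -/
import Mathlib

section
/- Let G be a finite k-regular simple graph (k ≥ 1) on v = 2t vertices with t ≥ 1, and let θ_min be the smallest eigenvalue of its adjacency matrix. Then h_G ≤ (k − θ_min)/(2k). -/
/-! Test the adjacency quadratic form on the `±1` vector `x` of a balanced cut `(S, Sᶜ)` with
`|S| = t`. Then `x ⬝ x = 2t` and, by `k`-regularity, `x ⬝ A x = 2tk - 4 E[S,Sᶜ]`, while
`θ_min (x ⬝ x) ≤ x ⬝ A x`. Hence `E[S,Sᶜ] ≤ t (k - θ_min) / 2`, and `S` itself witnesses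
`h_G ≤ E[S,Sᶜ] / (k t) ≤ (k - θ_min) / (2k)`. -/

open Finset Matrix

/-- `E[S,T]`: the number of ordered pairs `(x, y)` with `x ∈ S`, `y ∈ T` and `x, y` adjacent. -/
def eB {V : Type} [Fintype V] [DecidableEq V] (G : SimpleGraph V) [DecidableRel G.Adj]
    (S T : Finset V) : ℕ :=
  ((S ×ˢ T).filter fun p => G.Adj p.1 p.2).card

/-- The Cheeger constant of a `k`-regular graph `G`: the infimum of
`E[S,Sᶜ] / (k·|S|)` over nonempty vertex subsets `S` with `2·|S| ≤ |V|`. -/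
noncomputable def cheeger {V : Type} [Fintype V] [DecidableEq V] (G : SimpleGraph V)
    [DecidableRel G.Adj] (k : ℕ) : ℝ :=
  sInf {x : ℝ | ∃ S : Finset V, S.Nonempty ∧ 2 * S.card ≤ Fintype.card V ∧
    x = (eB G S Sᶜ : ℝ) / (k * S.card)}

/-- `θ` is an eigenvalue of the adjacency matrix of `G`. -/
def IsAdjEigenvalue {V : Type} [Fintype V] [DecidableEq V] (G : SimpleGraph V)
    [DecidableRel G.Adj] (θ : ℝ) : Prop :=
  ∃ f : V → ℝ, f ≠ 0 ∧ G.adjMatrix ℝ *ᵥ f = θ • f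

/-- `θ` is the second-largest adjacency eigenvalue of the connected `k`-regular graph `G`,
i.e. the largest eigenvalue distinct from the top eigenvalue `k`
(which has multiplicity one for connected graphs). -/
def IsSecondLargestAdjEigenvalue {V : Type} [Fintype V] [DecidableEq V] (G : SimpleGraph V)
    [DecidableRel G.Adj] (k : ℕ) (θ : ℝ) : Prop :=
  IsAdjEigenvalue G θ ∧ θ ≠ (k : ℝ) ∧ ∀ μ : ℝ, IsAdjEigenvalue G μ → μ ≠ (k : ℝ) → μ ≤ θ

namespace Matrix

lemma IsSymm.dotProduct_mulVec_comm {n R : Type} [Fintype n] [CommSemiring R]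
    {A : Matrix n n R} (hA : A.IsSymm) (v w : n → R) : v ⬝ᵥ A *ᵥ w = w ⬝ᵥ A *ᵥ v := by
  rw [dotProduct_mulVec, ← mulVec_transpose, hA.eq, dotProduct_comm]

lemma IsHermitian.mul_dotProduct_self_le_dotProduct_mulVec {n : Type} [Fintype n] [DecidableEq n]
    {A : Matrix n n ℝ} (hA : A.IsHermitian) {c : ℝ}
    (hc : ∀ μ : ℝ, ∀ f : n → ℝ, f ≠ 0 → A *ᵥ f = μ • f → c ≤ μ) (x : n → ℝ) :
    c * (x ⬝ᵥ x) ≤ x ⬝ᵥ A *ᵥ x := by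
  have hB : (A - c • 1).IsHermitian := hA.sub (isHermitian_one.smul (IsSelfAdjoint.all c))
  have hev : ∀ i, 0 ≤ hB.eigenvalues i := fun i => by
    have hne : (⇑(hB.eigenvectorBasis i) : n → ℝ) ≠ 0 := by
      simpa using hB.eigenvectorBasis.orthonormal.ne_zero i
    have hAe : A *ᵥ ⇑(hB.eigenvectorBasis i) =
        (hB.eigenvalues i + c) • ⇑(hB.eigenvectorBasis i) := by
      have := hB.mulVec_eigenvectorBasis i
      rw [sub_mulVec, smul_mulVec, one_mulVec] at this
      rw [add_smul, ← this, sub_add_cancel]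
    linarith [hc _ _ hne hAe]
  have := (hB.posSemidef_iff_eigenvalues_nonneg.mpr hev).dotProduct_mulVec_nonneg x
  rw [star_trivial, sub_mulVec, smul_mulVec, one_mulVec, dotProduct_sub, dotProduct_smul,
    smul_eq_mul] at this
  linarith

end Matrix

section Cut

variable {V : Type} [Fintype V] {G : SimpleGraph V} [DecidableRel G.Adj]

lemma SimpleGraph.IsRegularOfDegree.one_dotProduct_adjMatrix_mulVec_one {k : ℕ}
    (hreg : G.IsRegularOfDegree k) :
    (1 : V → ℝ) ⬝ᵥ G.adjMatrix ℝ *ᵥ 1 = Fintype.card V * k := by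
  simp [dotProduct, hreg.degree_eq]

noncomputable def cutVector (S : Finset V) : V → ℝ :=
  (S : Set V).indicator 1 - (S : Set V)ᶜ.indicator 1

lemma cutVector_dotProduct_self (S : Finset V) :
    cutVector S ⬝ᵥ cutVector S = Fintype.card V := by
  have hsq : ∀ v, cutVector S v * cutVector S v = 1 := fun v => by
    by_cases hv : v ∈ S <;> simp [cutVector, hv]
  simp [dotProduct, hsq]

variable [DecidableEq V]

lemma eB_eq_dotProduct_adjMatrix_mulVec (S T : Finset V) :
    (eB G S T : ℝ) = (S : Set V).indicator 1 ⬝ᵥ G.adjMatrix ℝ *ᵥ (T : Set V).indicator 1 := by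
  rw [SimpleGraph.dotProduct_mulVec_adjMatrix, eB, card_filter, sum_product]
  simp [Set.indicator_apply, ← sum_filter, filter_inter]

lemma cutVector_dotProduct_adjMatrix_mulVec {k : ℕ} (hreg : G.IsRegularOfDegree k)
    (S : Finset V) :
    cutVector S ⬝ᵥ G.adjMatrix ℝ *ᵥ cutVector S = Fintype.card V * k - 4 * eB G S Sᶜ := by
  set a : V → ℝ := (S : Set V).indicator 1
  set b : V → ℝ := (S : Set V)ᶜ.indicator 1
  have hab : a + b = 1 := Set.indicator_self_add_compl _ _
  have hsymm := G.isSymm_adjMatrix.dotProduct_mulVec_comm a b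
  have hone := hreg.one_dotProduct_adjMatrix_mulVec_one
  rw [← hab, add_dotProduct, mulVec_add, dotProduct_add, dotProduct_add] at hone
  rw [eB_eq_dotProduct_adjMatrix_mulVec, coe_compl, cutVector, sub_dotProduct, mulVec_sub,
    dotProduct_sub, dotProduct_sub]
  linarith

lemma four_mul_eB_compl_le {k : ℕ} (hreg : G.IsRegularOfDegree k) {c : ℝ}
    (hc : ∀ μ : ℝ, IsAdjEigenvalue G μ → c ≤ μ) (S : Finset V) :
    4 * (eB G S Sᶜ : ℝ) ≤ Fintype.card V * (k - c) := by
  have := (G.isHermitian_adjMatrix ℝ).mul_dotProduct_self_le_dotProduct_mulVec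
    (fun μ f hf hμ => hc μ ⟨f, hf, hμ⟩) (cutVector S)
  rw [cutVector_dotProduct_self, cutVector_dotProduct_adjMatrix_mulVec hreg] at this
  linarith

lemma cheeger_le_eB_compl_div {S : Finset V} (hS : S.Nonempty) (hcard : 2 * #S ≤ Fintype.card V)
    (k : ℕ) :
    cheeger G k ≤ eB G S Sᶜ / (k * #S) :=
  csInf_le ⟨0, by rintro _ ⟨T, -, -, rfl⟩; positivity⟩ ⟨S, hS, hcard, rfl⟩

end Cut

theorem stmt_2_general {V : Type} [Fintype V] [DecidableEq V] (G : SimpleGraph V) [DecidableRel G.Adj]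
    (k t : ℕ) (ht : 1 ≤ t) (hcard : Fintype.card V = 2 * t)
    (hreg : G.IsRegularOfDegree k)
    (θmin : ℝ)
    (hmin : ∀ μ : ℝ, IsAdjEigenvalue G μ → θmin ≤ μ) :
    cheeger G k ≤ ((k : ℝ) - θmin) / (2 * (k : ℝ)) := by
  obtain ⟨S, -, hS⟩ := exists_subset_card_eq (s := (univ : Finset V)) (n := t)
    (by simp [hcard]; omega)
  have hcut : 4 * (eB G S Sᶜ : ℝ) ≤ 2 * t * (k - θmin) := by
    simpa [hcard] using four_mul_eB_compl_le hreg hmin S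
  calc cheeger G k ≤ eB G S Sᶜ / (k * t) := by
        simpa [hS] using cheeger_le_eB_compl_div (S := S) (card_pos.mp (by omega)) (by omega) k
    _ = eB G S Sᶜ / t / k := by rw [mul_comm, div_div]
    _ ≤ (k - θmin) / 2 / k := by
        refine div_le_div_of_nonneg_right ?_ k.cast_nonneg
        rw [div_le_iff₀ (by positivity)]
        linarith
    _ = (k - θmin) / (2 * k) := by rw [div_div]

/-- For a finite `k`-regular graph (`k ≥ 1`) on `2t` vertices (`t ≥ 1`) with smallest
adjacency eigenvalue `θmin`, one has `h_G ≤ (k - θmin)/(2k)`. -/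
theorem stmt_2 {V : Type} [Fintype V] [DecidableEq V] (G : SimpleGraph V) [DecidableRel G.Adj]
    (k t : ℕ) (hk : 1 ≤ k) (ht : 1 ≤ t) (hcard : Fintype.card V = 2 * t)
    (hreg : G.IsRegularOfDegree k)
    (θmin : ℝ) (hθ : IsAdjEigenvalue G θmin)
    (hmin : ∀ μ : ℝ, IsAdjEigenvalue G μ → θmin ≤ μ) :
    cheeger G k ≤ ((k : ℝ) - θmin) / (2 * (k : ℝ)) :=
  stmt_2_general G k t ht hcard hreg θmin hmin
end

section
/- Let G be a finite k-regular simple graph (k ≥ 1) on v = 2t + 1 vertices with t ≥ 1, and let θ_min be the smallest eigenvalue of its adjacency matrix. Then h_G ≤ (t+1)·(k − θ_min)/((2t+1)·k). -/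
open Finset Matrix

/-! Test the Laplacian `kI - A` against the vector `x` equal to `t + 1` on a set `S` of `t`
vertices and to `-t` on its complement. Its quadratic form is `(2t+1)² E[S,Sᶜ]`, since only the
edges crossing the cut contribute, while `x ⬝ᵥ x = t(t+1)(2t+1)` and every eigenvalue of `kI - A`
is at most `k - θ_min`. Hence `(2t+1) E[S,Sᶜ] ≤ (k - θ_min) t (t+1)`, and `S` itself witnesses
the bound on `h_G`. -/

lemma Matrix.IsHermitian.mul_dotProduct_self_le {n : Type*} [Fintype n] [DecidableEq n]
    {A : Matrix n n ℝ} (hA : A.IsHermitian) {θ : ℝ}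
    (hθ : ∀ (μ : ℝ) (f : n → ℝ), f ≠ 0 → A *ᵥ f = μ • f → θ ≤ μ) (x : n → ℝ) :
    θ * (x ⬝ᵥ x) ≤ x ⬝ᵥ (A *ᵥ x) := by
  have hM : (A - θ • 1).IsHermitian := hA.sub (isHermitian_one.smul (.all θ))
  have hpsd : (A - θ • 1).PosSemidef := by
    refine hM.posSemidef_iff_eigenvalues_nonneg.mpr fun i => ?_
    have hf : A *ᵥ ⇑(hM.eigenvectorBasis i) =
        (hM.eigenvalues i + θ) • ⇑(hM.eigenvectorBasis i) := by
      have := hM.mulVec_eigenvectorBasis i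
      rw [sub_mulVec, smul_mulVec, one_mulVec, sub_eq_iff_eq_add] at this
      rw [this, add_smul]
    have hf0 : ⇑(hM.eigenvectorBasis i) ≠ (0 : n → ℝ) :=
      (WithLp.ofLp_eq_zero 2).ne.2 (hM.eigenvectorBasis.orthonormal.ne_zero i)
    simpa using hθ _ _ hf0 hf
  have := hpsd.dotProduct_mulVec_nonneg x
  rw [star_trivial, sub_mulVec, smul_mulVec, one_mulVec, dotProduct_sub, dotProduct_smul,
    smul_eq_mul] at this
  linarith

lemma dotProduct_self_ite {V R : Type*} [Fintype V] [DecidableEq V] [CommSemiring R]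
    (S : Finset V) (c d : R) :
    (fun v => if v ∈ S then c else d) ⬝ᵥ (fun v => if v ∈ S then c else d) =
      c ^ 2 * S.card + d ^ 2 * Sᶜ.card := by
  simp only [dotProduct, ite_mul_ite, Finset.sum_ite]
  simp [sq, mul_comm, Finset.filter_not, Finset.compl_eq_univ_sdiff]

namespace SimpleGraph

variable {V : Type} [Fintype V] [DecidableEq V] (G : SimpleGraph V) [DecidableRel G.Adj]

lemma eB_comm (S T : Finset V) : eB G S T = eB G T S :=
  Finset.card_nbij' Prod.swap Prod.swap (fun _ _ => by simp_all [G.adj_comm])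
    (fun _ _ => by simp_all [G.adj_comm]) (fun _ _ => rfl) (fun _ _ => rfl)

lemma eB_eq_sum_ite {R : Type*} [AddCommMonoidWithOne R] (S T : Finset V) :
    (eB G S T : R) = ∑ i, ∑ j, if i ∈ S ∧ j ∈ T ∧ G.Adj i j then 1 else 0 := by
  rw [eB, Finset.natCast_card_filter, Finset.sum_product]
  simp only [ite_and, Finset.sum_ite_irrel, Finset.sum_const_zero, Fintype.sum_ite_mem]

lemma dotProduct_lapMatrix_mulVec_ite {R : Type*} [Field R] [CharZero R] (S : Finset V)
    (c d : R) :
    (fun v => if v ∈ S then c else d) ⬝ᵥ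
        (G.lapMatrix R *ᵥ fun v => if v ∈ S then c else d) = (c - d) ^ 2 * eB G S Sᶜ := by
  rw [← toLinearMap₂'_apply', lapMatrix_toLinearMap₂']
  have hterm : ∀ i j, (if G.Adj i j then
      ((if i ∈ S then c else d) - if j ∈ S then c else d) ^ 2 else 0) =
      (c - d) ^ 2 * ((if i ∈ S ∧ j ∈ Sᶜ ∧ G.Adj i j then 1 else 0) +
        (if i ∈ Sᶜ ∧ j ∈ S ∧ G.Adj i j then 1 else 0)) := by
    intro i j
    by_cases hi : i ∈ S <;> by_cases hj : j ∈ S <;> simp [hi, hj, sub_sq_comm d c]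
  simp_rw [hterm, ← Finset.mul_sum, Finset.sum_add_distrib, ← eB_eq_sum_ite, eB_comm G Sᶜ S]
  ring

variable {G} in
lemma IsRegularOfDegree.dotProduct_lapMatrix_mulVec_le {k : ℕ} (hreg : G.IsRegularOfDegree k)
    {θ : ℝ} (hθ : ∀ μ : ℝ, IsAdjEigenvalue G μ → θ ≤ μ) (x : V → ℝ) :
    x ⬝ᵥ (G.lapMatrix ℝ *ᵥ x) ≤ (k - θ) * (x ⬝ᵥ x) := by
  have hdeg : x ⬝ᵥ (G.degMatrix ℝ *ᵥ x) = k * (x ⬝ᵥ x) := by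
    rw [dotProduct_mulVec_degMatrix, dotProduct, Finset.mul_sum]
    exact Finset.sum_congr rfl fun i _ => by rw [hreg i, mul_assoc]
  have hadj := (G.isHermitian_adjMatrix ℝ).mul_dotProduct_self_le
    (fun μ f hf hμ => hθ μ ⟨f, hf, hμ⟩) x
  rw [lapMatrix, sub_mulVec, dotProduct_sub, hdeg]
  linarith

lemma cheeger_le {S : Finset V} (hS : S.Nonempty) (hcard : 2 * S.card ≤ Fintype.card V)
    (k : ℕ) : cheeger G k ≤ eB G S Sᶜ / (k * S.card) :=
  csInf_le ⟨0, by rintro _ ⟨T, -, -, rfl⟩; positivity⟩ ⟨S, hS, hcard, rfl⟩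

end SimpleGraph

theorem stmt_3_general {V : Type} [Fintype V] [DecidableEq V] (G : SimpleGraph V) [DecidableRel G.Adj]
    (k t : ℕ) (ht : 1 ≤ t) (hcard : Fintype.card V = 2 * t + 1)
    (hreg : G.IsRegularOfDegree k)
    (θmin : ℝ)
    (hmin : ∀ μ : ℝ, IsAdjEigenvalue G μ → θmin ≤ μ) :
    cheeger G k ≤ ((t : ℝ) + 1) * ((k : ℝ) - θmin) / ((2 * (t : ℝ) + 1) * (k : ℝ)) := by
  obtain ⟨S, -, hS⟩ := Finset.exists_subset_card_eq (s := (Finset.univ : Finset V)) (n := t)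
    (by rw [Finset.card_univ, hcard]; omega)
  have hSc : Sᶜ.card = t + 1 := by rw [Finset.card_compl, hS, hcard]; omega
  have hrayleigh := hreg.dotProduct_lapMatrix_mulVec_le hmin
    (fun v => if v ∈ S then (t : ℝ) + 1 else -t)
  rw [G.dotProduct_lapMatrix_mulVec_ite, dotProduct_self_ite, hS, hSc] at hrayleigh
  have hcut : (2 * t + 1) * (eB G S Sᶜ : ℝ) ≤ (t + 1) * (k - θmin) * t := by
    refine le_of_mul_le_mul_left ?_ (by positivity : (0 : ℝ) < 2 * t + 1)
    push_cast at hrayleigh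
    linear_combination hrayleigh
  have hS0 : S.Nonempty := by rw [← Finset.card_pos]; omega
  calc cheeger G k ≤ eB G S Sᶜ / (k * t) := hS ▸ G.cheeger_le hS0 (by rw [hS, hcard]; omega) k
    _ = eB G S Sᶜ / t / k := by rw [div_div, mul_comm]
    _ ≤ (t + 1) * (k - θmin) / (2 * t + 1) / k := by
      gcongr ?_ / _
      rw [div_le_div_iff₀ (by positivity) (by positivity)]
      linarith
    _ = _ := div_div _ _ _

/-- For a finite `k`-regular graph (`k ≥ 1`) on `2t+1` vertices (`t ≥ 1`) with smallest
adjacency eigenvalue `θmin`, one has `h_G ≤ (t+1)·(k - θmin)/((2t+1)·k)`. -/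
theorem stmt_3 {V : Type} [Fintype V] [DecidableEq V] (G : SimpleGraph V) [DecidableRel G.Adj]
    (k t : ℕ) (hk : 1 ≤ k) (ht : 1 ≤ t) (hcard : Fintype.card V = 2 * t + 1)
    (hreg : G.IsRegularOfDegree k)
    (θmin : ℝ) (hθ : IsAdjEigenvalue G θmin)
    (hmin : ∀ μ : ℝ, IsAdjEigenvalue G μ → θmin ≤ μ) :
    cheeger G k ≤ ((t : ℝ) + 1) * ((k : ℝ) - θmin) / ((2 * (t : ℝ) + 1) * (k : ℝ)) :=
  stmt_3_general G k t ht hcard hreg θmin hmin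
end

section
/- Let G be a finite connected bipartite k-regular simple graph (k ≥ 1) on 2r vertices, where r = 2m + 1 is odd with m ≥ 1. Then h_G ≤ 1/2 + 1/(2r²). -/
open Finset Matrix

/-! Let `A`, `B` be the two sides, each of size `r`. Averaging over all choices of `P ⊆ A` with
`m + 1` vertices and `Q ⊆ B` with `m` vertices, a fixed edge between `A` and `B` lands in `P × Q`
with probability `(m + 1) m / r²`, so some choice has `E[P,Q] ≥ k m (m + 1) / r`. The set
`S = P ∪ Q` has `r` vertices and, the sides being independent, `E[S,S] = 2 E[P,Q]`; hence
`E[S,Sᶜ] = k r - 2 E[P,Q] ≤ k r (1 - 2 m (m + 1) / r²) = k r (1/2 + 1/(2r²))`. -/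

theorem Finset.card_filter_mem_powersetCard_mul_card {α : Type*} [DecidableEq α] {s : Finset α}
    {a : α} (ha : a ∈ s) (n : ℕ) :
    #{t ∈ s.powersetCard n | a ∈ t} * #s = n * (#s).choose n := by
  cases n with
  | zero => simp
  | succ n =>
    obtain ⟨c, hc⟩ : ∃ c, #s = c + 1 := Nat.exists_eq_add_one.2 (card_pos.2 ⟨a, ha⟩)
    simp_rw [← singleton_subset_iff (a := a)]
    rw [card_filter_powersetCard_subset _ _ _ (singleton_subset_iff.2 ha) (by simp), card_singleton,
      hc, Nat.add_sub_cancel, Nat.add_sub_cancel, mul_comm, Nat.add_one_mul_choose_eq, mul_comm]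

theorem SimpleGraph.isBipartiteWith_compl {V : Type*} {G : SimpleGraph V} {A : Set V}
    (h : ∀ x y, G.Adj x y → (x ∈ A ↔ y ∉ A)) : G.IsBipartiteWith A Aᶜ where
  disjoint := disjoint_compl_right
  mem_of_adj x y hxy := by
    by_cases hx : x ∈ A
    · exact Or.inl ⟨hx, (h x y hxy).1 hx⟩
    · exact Or.inr ⟨hx, not_not.1 (mt (h x y hxy).2 hx)⟩

theorem SimpleGraph.IsRegularOfDegree.card_eq_card_of_isBipartiteWith {V : Type} [Fintype V]
    {G : SimpleGraph V} [DecidableRel G.Adj] {k : ℕ} (hreg : G.IsRegularOfDegree k) (hk : k ≠ 0)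
    {A B : Finset V} (h : G.IsBipartiteWith ↑A ↑B) : #A = #B := by
  have hdeg := isBipartiteWith_sum_degrees_eq h
  rw [sum_const_nat fun x _ => hreg.degree_eq x, sum_const_nat fun x _ => hreg.degree_eq x] at hdeg
  exact Nat.eq_of_mul_eq_mul_right (Nat.pos_of_ne_zero hk) hdeg

section eB

variable {V : Type} [Fintype V] [DecidableEq V] (G : SimpleGraph V) [DecidableRel G.Adj]

theorem eB_eq_sum_ite (S T : Finset V) :
    eB G S T = ∑ x ∈ S, ∑ y ∈ T, if G.Adj x y then 1 else 0 := by
  rw [eB, card_filter, sum_product]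

theorem eB_comm (S T : Finset V) : eB G S T = eB G T S := by
  rw [eB_eq_sum_ite, eB_eq_sum_ite, sum_comm]
  simp only [G.adj_comm]

theorem eB_union_left {S S' : Finset V} (h : Disjoint S S') (T : Finset V) :
    eB G (S ∪ S') T = eB G S T + eB G S' T := by
  simp only [eB_eq_sum_ite, sum_union h]

theorem eB_union_right (S : Finset V) {T T' : Finset V} (h : Disjoint T T') :
    eB G S (T ∪ T') = eB G S T + eB G S T' := by
  rw [eB_comm, eB_union_left G h, eB_comm, eB_comm G T']

theorem eB_add_eB_compl {k : ℕ} (hreg : G.IsRegularOfDegree k) (S T : Finset V) :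
    eB G S T + eB G S Tᶜ = #S * k := by
  simp only [eB_eq_sum_ite, ← sum_add_distrib]
  refine (sum_congr rfl fun x _ => ?_).trans (sum_const_nat fun _ _ => rfl)
  rw [sum_add_sum_compl, sum_boole, Nat.cast_id, ← SimpleGraph.neighborFinset_eq_filter,
    SimpleGraph.card_neighborFinset_eq_degree, hreg.degree_eq]

theorem eB_eq_sum_ite_of_subset {A B P Q : Finset V} (hP : P ⊆ A) (hQ : Q ⊆ B) :
    eB G P Q = ∑ x ∈ A, ∑ y ∈ B,
      (if x ∈ P then 1 else 0) * ((if y ∈ Q then 1 else 0) * (if G.Adj x y then 1 else 0)) := by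
  simp only [← mul_sum]
  simp only [boole_mul, sum_ite_mem, inter_eq_right.2 hP, inter_eq_right.2 hQ, eB_eq_sum_ite]

theorem sum_eB_powersetCard_mul (A B : Finset V) (p q : ℕ) :
    (∑ P ∈ A.powersetCard p, ∑ Q ∈ B.powersetCard q, eB G P Q) * (#A * #B) =
      eB G A B * (p * (#A).choose p) * (q * (#B).choose q) := by
  have hsum : ∑ P ∈ A.powersetCard p, ∑ Q ∈ B.powersetCard q, eB G P Q =
      ∑ x ∈ A, ∑ y ∈ B, #{P ∈ A.powersetCard p | x ∈ P} *
        (#{Q ∈ B.powersetCard q | y ∈ Q} * if G.Adj x y then 1 else 0) := by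
    rw [sum_congr rfl fun P hP => sum_congr rfl fun Q hQ =>
      eB_eq_sum_ite_of_subset G (mem_powersetCard.1 hP).1 (mem_powersetCard.1 hQ).1]
    rw [sum_congr rfl fun P _ => sum_comm, sum_comm]
    refine sum_congr rfl fun x _ => ?_
    rw [sum_congr rfl fun P _ => sum_comm, sum_comm]
    refine sum_congr rfl fun y _ => ?_
    simp only [← mul_sum, ← sum_mul, sum_boole, Nat.cast_id]
  rw [hsum, eB_eq_sum_ite, sum_mul, sum_mul, sum_mul]
  refine sum_congr rfl fun x hx => ?_
  rw [sum_mul, sum_mul, sum_mul]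
  refine sum_congr rfl fun y hy => ?_
  rw [← card_filter_mem_powersetCard_mul_card hx, ← card_filter_mem_powersetCard_mul_card hy]
  ring

theorem exists_eB_ge_average {A B : Finset V} {p q : ℕ} (hp : p ≤ #A) (hq : q ≤ #B) :
    ∃ P ∈ A.powersetCard p, ∃ Q ∈ B.powersetCard q, eB G A B * p * q ≤ eB G P Q * (#A * #B) := by
  have hne : (A.powersetCard p ×ˢ B.powersetCard q).Nonempty :=
    (powersetCard_nonempty.2 hp).product (powersetCard_nonempty.2 hq)
  obtain ⟨⟨P, Q⟩, hPQ, hle⟩ := exists_le_of_sum_le hne (f := fun _ => eB G A B * p * q)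
    (g := fun PQ => eB G PQ.1 PQ.2 * (#A * #B)) <| by
      rw [sum_const, card_product, card_powersetCard, card_powersetCard, smul_eq_mul, ← sum_mul,
        sum_product, sum_eB_powersetCard_mul]
      exact (by ring : _ = _).le
  exact ⟨P, (mem_product.1 hPQ).1, Q, (mem_product.1 hPQ).2, hle⟩

variable {G}

theorem eB_eq_sum_degree_of_isBipartiteWith {A B : Finset V} (h : G.IsBipartiteWith ↑A ↑B) :
    eB G A B = ∑ x ∈ A, G.degree x := by
  rw [eB_eq_sum_ite]
  refine sum_congr rfl fun x hx => ?_
  rw [sum_boole, Nat.cast_id, ← SimpleGraph.isBipartiteWith_neighborFinset h hx,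
    SimpleGraph.card_neighborFinset_eq_degree]

theorem eB_eq_zero_of_isBipartiteWith {A B S T : Finset V} (h : G.IsBipartiteWith ↑A ↑B)
    (hS : S ⊆ A) (hT : T ⊆ A) : eB G S T = 0 := by
  rw [eB_eq_sum_ite]
  refine sum_eq_zero fun x hx => sum_eq_zero fun y hy => if_neg fun hxy => ?_
  exact Set.disjoint_left.1 h.disjoint (hT hy) (h.mem_of_mem_adj (hS hx) hxy)

theorem eB_union_self_of_isBipartiteWith {A B P Q : Finset V} (h : G.IsBipartiteWith ↑A ↑B)
    (hP : P ⊆ A) (hQ : Q ⊆ B) : eB G (P ∪ Q) (P ∪ Q) = 2 * eB G P Q := by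
  have hPQ : Disjoint P Q := (disjoint_coe.1 h.disjoint).mono hP hQ
  rw [eB_union_left G hPQ, eB_union_right G _ hPQ, eB_union_right G _ hPQ,
    eB_eq_zero_of_isBipartiteWith h hP hP, eB_eq_zero_of_isBipartiteWith h.symm hQ hQ,
    eB_comm G Q P]
  ring

end eB

theorem cheeger_le {V : Type} [Fintype V] [DecidableEq V] (G : SimpleGraph V) [DecidableRel G.Adj]
    (k : ℕ) {S : Finset V} (hS : S.Nonempty) (hSV : 2 * #S ≤ Fintype.card V) :
    cheeger G k ≤ eB G S Sᶜ / (k * #S) :=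
  csInf_le ⟨0, by rintro _ ⟨T, -, -, rfl⟩; positivity⟩ ⟨S, hS, hSV, rfl⟩

theorem div_le_half_add_one_div_two_mul_sq {c e k m r : ℝ} (hk : 0 < k) (hm : 0 ≤ m)
    (hr : r = 2 * m + 1) (hcut : c + 2 * e = r * k) (hdense : r * k * (m + 1) * m ≤ e * (r * r)) :
    c / (k * r) ≤ 1 / 2 + 1 / (2 * r ^ 2) := by
  have hrpos : 0 < r := by rw [hr]; positivity
  have he : k * (m + 1) * m ≤ e * r := by nlinarith
  rw [div_le_iff₀ (by positivity),
    show (1 / 2 + 1 / (2 * r ^ 2)) * (k * r) = (k * r ^ 2 + k) / (2 * r) by field_simp,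
    le_div_iff₀ (by positivity)]
  have hr2 : k * r ^ 2 = 4 * (k * (m + 1) * m) + k := by rw [hr]; ring
  nlinarith

theorem stmt_5_general {V : Type} [Fintype V] [DecidableEq V] (G : SimpleGraph V) [DecidableRel G.Adj]
    (k r m : ℕ) (hk : 1 ≤ k) (hr : r = 2 * m + 1)
    (hcard : Fintype.card V = 2 * r)
    (hreg : G.IsRegularOfDegree k)
    (hbip : ∃ A : Set V, ∀ x y : V, G.Adj x y → (x ∈ A ↔ y ∉ A)) :
    cheeger G k ≤ 1 / 2 + 1 / (2 * (r : ℝ) ^ 2) := by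
  classical
  obtain ⟨A, hA⟩ := hbip
  have hAB : G.IsBipartiteWith ↑A.toFinset ↑A.toFinsetᶜ := by
    rw [coe_compl, Set.coe_toFinset]
    exact SimpleGraph.isBipartiteWith_compl hA
  have hAr : #A.toFinset = r := by
    have := hreg.card_eq_card_of_isBipartiteWith (by omega) hAB
    have := card_add_card_compl A.toFinset
    omega
  have hBr : #A.toFinsetᶜ = r := by rw [card_compl]; omega
  obtain ⟨P, hP, Q, hQ, hPQ⟩ := exists_eB_ge_average G (A := A.toFinset) (B := A.toFinsetᶜ)
    (p := m + 1) (q := m) (by omega) (by omega)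
  rw [mem_powersetCard] at hP hQ
  rw [eB_eq_sum_degree_of_isBipartiteWith hAB, sum_const_nat fun x _ => hreg.degree_eq x, hAr,
    hBr] at hPQ
  have hS : #(P ∪ Q) = r := by
    rw [card_union_of_disjoint (disjoint_compl_right.mono hP.1 hQ.1), hP.2, hQ.2]; omega
  have hcut : eB G (P ∪ Q) (P ∪ Q)ᶜ + 2 * eB G P Q = r * k := by
    rw [← eB_union_self_of_isBipartiteWith hAB hP.1 hQ.1, add_comm, eB_add_eB_compl G hreg, hS]
  refine (cheeger_le G k (S := P ∪ Q) (card_pos.1 (by omega)) (by omega)).trans ?_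
  rw [hS]
  exact div_le_half_add_one_div_two_mul_sq (e := eB G P Q) (by exact_mod_cast hk) m.cast_nonneg
    (by exact_mod_cast hr) (by exact_mod_cast hcut) (by exact_mod_cast hPQ)

/-- A finite connected bipartite `k`-regular graph (`k ≥ 1`) on `2r` vertices with
`r = 2m + 1` odd (`m ≥ 1`) satisfies `h_G ≤ 1/2 + 1/(2r²)`. -/
theorem stmt_5 {V : Type} [Fintype V] [DecidableEq V] (G : SimpleGraph V) [DecidableRel G.Adj]
    (k r m : ℕ) (hk : 1 ≤ k) (hm : 1 ≤ m) (hr : r = 2 * m + 1)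
    (hcard : Fintype.card V = 2 * r)
    (hconn : G.Connected) (hreg : G.IsRegularOfDegree k)
    (hbip : ∃ A : Set V, ∀ x y : V, G.Adj x y → (x ∈ A ↔ y ∉ A)) :
    cheeger G k ≤ 1 / 2 + 1 / (2 * (r : ℝ) ^ 2) :=
  stmt_5_general G k r m hk hr hcard hreg hbip
end

section
/- Let G be a finite connected, non-complete strongly regular graph with parameters (v, k, a1, c2), and set b1 = k − a1 − 1. Then h_G ≤ max(b1/(k+1), c2/k). -/
/-!
Test the closed neighbourhood `S = {x} ∪ N(x)` of a vertex `x`. Every neighbour of `x` has exactly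
`a1 + 1` neighbours in `S`, so `E[S,Sᶜ] = k·b1` and the quotient for `S` is `b1/(k+1)`; every
vertex outside `S` has exactly `c2` neighbours in `S`, so `E[Sᶜ,S] = c2·|Sᶜ|` and the quotient for
`Sᶜ` is `c2/k`. One of `S`, `Sᶜ` contains at most half of the vertices, and `Sᶜ` is nonempty
because `G` is not complete.
-/

open Finset Matrix

namespace SimpleGraph

variable {V : Type} [Fintype V] [DecidableEq V] (G : SimpleGraph V) [DecidableRel G.Adj]

def closedNeighborFinset (x : V) : Finset V := insert x (G.neighborFinset x)

lemma card_closedNeighborFinset {k : ℕ} (hG : G.IsRegularOfDegree k) (x : V) :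
    #(G.closedNeighborFinset x) = k + 1 := by
  rw [closedNeighborFinset, card_insert_of_notMem (G.notMem_neighborFinset_self x),
    card_neighborFinset_eq_degree, hG.degree_eq]

lemma card_neighborFinset_inter_neighborFinset (v w : V) :
    #(G.neighborFinset v ∩ G.neighborFinset w) = Fintype.card (G.commonNeighbors v w) := by
  rw [← Set.toFinset_card]
  congr
  ext
  simp [mem_commonNeighbors]

lemma eB_eq_sum_card_inter_neighborFinset (S T : Finset V) :
    eB G S T = ∑ a ∈ S, #(T ∩ G.neighborFinset a) := by
  rw [eB, card_filter, sum_product]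
  refine sum_congr rfl fun a _ => ?_
  rw [← card_filter]
  congr 1
  ext b
  simp

lemma cheeger_le_of_card (k : ℕ) {S : Finset V} (hS : S.Nonempty)
    (hcard : 2 * #S ≤ Fintype.card V) :
    cheeger G k ≤ (eB G S Sᶜ : ℝ) / (k * #S) :=
  csInf_le ⟨0, fun _ ⟨_, _, _, hr⟩ => hr ▸ by positivity⟩ ⟨S, hS, hcard, rfl⟩

namespace IsSRGWith

variable {G} {n k ℓ μ : ℕ}

lemma card_compl_closedNeighborFinset_inter_of_adj (h : G.IsSRGWith n k ℓ μ) {x a : V}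
    (hax : G.Adj a x) :
    (#((G.closedNeighborFinset x)ᶜ ∩ G.neighborFinset a) : ℝ) = k - ℓ - 1 := by
  have hinter : G.closedNeighborFinset x ∩ G.neighborFinset a =
      insert x (G.neighborFinset x ∩ G.neighborFinset a) :=
    insert_inter_of_mem (by simpa using hax)
  have hsplit := card_sdiff_add_card_inter (G.neighborFinset a) (G.closedNeighborFinset x)
  rw [inter_comm, hinter, card_insert_of_notMem (by simp),
    card_neighborFinset_inter_neighborFinset, h.of_adj x a hax.symm,
    card_neighborFinset_eq_degree, h.regular.degree_eq, sdiff_eq_inter_compl, inter_comm] at hsplit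
  rw [← hsplit]
  push_cast
  ring

lemma eB_closedNeighborFinset_compl (h : G.IsSRGWith n k ℓ μ) (x : V) :
    (eB G (G.closedNeighborFinset x) (G.closedNeighborFinset x)ᶜ : ℝ) = k * (k - ℓ - 1) := by
  have hx : (G.closedNeighborFinset x)ᶜ ∩ G.neighborFinset x = ∅ := by
    ext; simp [closedNeighborFinset]
  rw [eB_eq_sum_card_inter_neighborFinset, closedNeighborFinset, sum_insert (by simp),
    ← closedNeighborFinset, hx, card_empty, zero_add, Nat.cast_sum,
    sum_congr rfl fun a ha =>
      h.card_compl_closedNeighborFinset_inter_of_adj (by simpa [adj_comm] using ha),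
    sum_const, card_neighborFinset_eq_degree, h.regular.degree_eq, nsmul_eq_mul]

lemma eB_compl_closedNeighborFinset (h : G.IsSRGWith n k ℓ μ) (x : V) :
    eB G (G.closedNeighborFinset x)ᶜ (G.closedNeighborFinset x) =
      #(G.closedNeighborFinset x)ᶜ * μ := by
  rw [eB_eq_sum_card_inter_neighborFinset, ← smul_eq_mul, ← sum_const]
  refine sum_congr rfl fun z hz => ?_
  have hxz : x ≠ z := by rintro rfl; simp_all [closedNeighborFinset]
  have hnadj : ¬G.Adj x z := fun hadj => by simp_all [closedNeighborFinset]
  rw [closedNeighborFinset, insert_inter_of_notMem (by simpa [adj_comm] using hnadj),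
    card_neighborFinset_inter_neighborFinset, h.of_not_adj hxz hnadj]

end IsSRGWith

end SimpleGraph

/-- A finite connected non-complete strongly regular graph with parameters `(v, k, a1, c2)`
satisfies `h_G ≤ max (b1/(k+1)) (c2/k)`, where `b1 = k - a1 - 1`. -/
theorem stmt_6 {V : Type} [Fintype V] [DecidableEq V] (G : SimpleGraph V) [DecidableRel G.Adj]
    (v k a1 c2 : ℕ) (hsrg : G.IsSRGWith v k a1 c2)
    (hconn : G.Connected) (hnc : G ≠ ⊤) :
    cheeger G k ≤ max (((k : ℝ) - (a1 : ℝ) - 1) / ((k : ℝ) + 1)) ((c2 : ℝ) / (k : ℝ)) := by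
  obtain ⟨x, y, hxy, hnadj⟩ := SimpleGraph.ne_top_iff_exists_not_adj.1 hnc
  have : Nontrivial V := ⟨x, y, hxy⟩
  have hk : (k : ℝ) ≠ 0 := by
    have hdeg := hconn.preconnected.degree_pos_of_nontrivial x
    rw [hsrg.regular.degree_eq] at hdeg
    positivity
  set S := G.closedNeighborFinset x
  have hS : #S = k + 1 := G.card_closedNeighborFinset hsrg.regular x
  have hy : y ∈ Sᶜ := by simp [S, SimpleGraph.closedNeighborFinset, hxy.symm, hnadj]
  rcases le_or_gt (2 * #S) (Fintype.card V) with hsmall | hlarge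
  · calc cheeger G k ≤ (eB G S Sᶜ : ℝ) / (k * #S) :=
          G.cheeger_le_of_card k ⟨x, mem_insert_self x _⟩ hsmall
      _ = (k - a1 - 1) / (k + 1) := by
          rw [hsrg.eB_closedNeighborFinset_compl, hS]
          push_cast
          rw [mul_div_mul_left _ _ hk]
      _ ≤ _ := le_max_left _ _
  · have hSc : #Sᶜ ≠ 0 := card_ne_zero.2 ⟨y, hy⟩
    calc cheeger G k ≤ (eB G Sᶜ Sᶜᶜ : ℝ) / (k * #Sᶜ) :=
          G.cheeger_le_of_card k ⟨y, hy⟩ (by rw [card_compl]; omega)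
      _ = c2 / k := by
          rw [compl_compl, hsrg.eB_compl_closedNeighborFinset]
          push_cast
          rw [mul_comm, mul_div_mul_right _ _ (by exact_mod_cast hSc)]
      _ ≤ _ := le_max_right _ _
end

section
/- Let G be a finite connected conference graph, i.e. a strongly regular graph with parameters (v, (v−1)/2, (v−5)/4, (v−1)/4), where v ≥ 5 and v ≡ 1 (mod 4). Then h_G ≤ (v − √v)/(v − 1). (Here (v − √v)/(v−1) equals λ1 = (k − θ1)/k, since the second-largest adjacency eigenvalue of a conference graph is θ1 = (√v − 1)/2.) -/
open Finset Matrix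

/-
The Cheeger constant is bounded by the expansion ratio of any admissible vertex set. For a
conference graph on `v ≥ 9` vertices take the neighbourhood `N(x)` of a vertex: each of its
`k = (v-1)/2` vertices has `a₁ = (v-5)/4` neighbours inside `N(x)`, so the ratio is
`(k - a₁)/k = (v+3)/(2(v-1))`, and `(v+3)/2 ≤ v - √v` amounts to `(v-1)(v-9) ≥ 0`.
For `v = 5` (the pentagon) the neighbourhood is too expensive; an edge has ratio `1/2`.
-/

namespace SimpleGraph

variable {V : Type} [Fintype V] [DecidableEq V] (G : SimpleGraph V) [DecidableRel G.Adj]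

lemma eB_eq_sum_card_neighborFinset_inter (S T : Finset V) :
    eB G S T = ∑ x ∈ S, #(G.neighborFinset x ∩ T) := by
  rw [eB, card_filter, sum_product]
  refine sum_congr rfl fun x _ => ?_
  rw [← card_filter, filter_mem_eq_inter.symm.trans ?_]
  ext y; simp [and_comm]

lemma eB_compl_eq_sum_of_isRegularOfDegree {k : ℕ} (hG : G.IsRegularOfDegree k)
    (S : Finset V) : eB G S Sᶜ = ∑ x ∈ S, (k - #(G.neighborFinset x ∩ S)) := by
  rw [eB_eq_sum_card_neighborFinset_inter]
  refine sum_congr rfl fun x _ => ?_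
  rw [← sdiff_eq_inter_compl, card_sdiff, inter_comm, card_neighborFinset_eq_degree, hG x]

lemma cheeger_le_eB_div (k : ℕ) {S : Finset V} (hS : S.Nonempty)
    (hS₂ : 2 * #S ≤ Fintype.card V) : cheeger G k ≤ (eB G S Sᶜ : ℝ) / (k * #S) :=
  csInf_le ⟨0, by rintro r ⟨T, -, -, rfl⟩; positivity⟩ ⟨S, hS, hS₂, rfl⟩

lemma card_neighborFinset_inter_of_isSRGWith {n k ℓ μ : ℕ} (hG : G.IsSRGWith n k ℓ μ)
    {x y : V} (hxy : G.Adj x y) : #(G.neighborFinset y ∩ G.neighborFinset x) = ℓ := by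
  rw [← hG.of_adj y x hxy.symm, ← Set.toFinset_card]
  congr 1
  ext w
  simp [mem_commonNeighbors]

lemma eB_compl_neighborFinset_of_isSRGWith {n k ℓ μ : ℕ} (hG : G.IsSRGWith n k ℓ μ) (x : V) :
    eB G (G.neighborFinset x) (G.neighborFinset x)ᶜ = k * (k - ℓ) := by
  rw [eB_compl_eq_sum_of_isRegularOfDegree G hG.regular,
    sum_congr rfl fun y hy => by
      rw [card_neighborFinset_inter_of_isSRGWith G hG ((mem_neighborFinset G x y).1 hy)],
    sum_const, card_neighborFinset_eq_degree, hG.regular x, smul_eq_mul]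

lemma eB_compl_pair_of_isRegularOfDegree {k : ℕ} (hG : G.IsRegularOfDegree k) {x y : V}
    (hxy : G.Adj x y) : eB G {x, y} {x, y}ᶜ = 2 * (k - 1) := by
  have h_inter : ∀ {a b : V}, G.Adj a b → G.neighborFinset a ∩ {a, b} = {b} := fun hab => by
    ext w
    simp only [mem_inter, mem_neighborFinset, mem_insert, mem_singleton]
    constructor
    · rintro ⟨hw, rfl | rfl⟩
      · exact absurd hw (G.irrefl)
      · rfl
    · rintro rfl
      exact ⟨hab, Or.inr rfl⟩
  rw [eB_compl_eq_sum_of_isRegularOfDegree G hG, sum_pair hxy.ne, h_inter hxy, pair_comm,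
    h_inter hxy.symm, card_singleton, card_singleton]
  omega

theorem cheeger_le_of_isSRGWith {n k ℓ μ : ℕ} (hG : G.IsSRGWith n k ℓ μ) (x : V)
    (hk : 0 < k) (hkn : 2 * k ≤ n) : cheeger G k ≤ ((k - ℓ : ℕ) : ℝ) / k := by
  have h_card : #(G.neighborFinset x) = k := by
    rw [card_neighborFinset_eq_degree, hG.regular x]
  obtain ⟨y, hy⟩ : (G.neighborFinset x).Nonempty := card_pos.1 (h_card ▸ hk)
  calc cheeger G k ≤ (eB G (G.neighborFinset x) (G.neighborFinset x)ᶜ : ℝ) / (k * k) := by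
        simpa [h_card] using cheeger_le_eB_div G k ⟨y, hy⟩ (by rw [h_card, hG.card]; exact hkn)
    _ = ((k - ℓ : ℕ) : ℝ) / k := by
        rw [eB_compl_neighborFinset_of_isSRGWith G hG, Nat.cast_mul,
          mul_div_mul_left _ _ (by positivity)]

theorem cheeger_le_of_isRegularOfDegree {k : ℕ} (hG : G.IsRegularOfDegree k) (x : V)
    (hk : 0 < k) (hV : 4 ≤ Fintype.card V) : cheeger G k ≤ ((k - 1 : ℕ) : ℝ) / k := by
  obtain ⟨y, hy⟩ : (G.neighborFinset x).Nonempty := by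
    rw [← card_pos, card_neighborFinset_eq_degree, hG x]
    exact hk
  have hxy : G.Adj x y := (mem_neighborFinset G x y).1 hy
  calc cheeger G k ≤ (eB G {x, y} {x, y}ᶜ : ℝ) / (k * #{x, y}) :=
        cheeger_le_eB_div G k (insert_nonempty x {y}) (by rw [card_pair hxy.ne]; omega)
    _ = ((k - 1 : ℕ) : ℝ) / k := by
        rw [eB_compl_pair_of_isRegularOfDegree G hG hxy, card_pair hxy.ne, Nat.cast_mul,
          mul_comm (k : ℝ), mul_div_mul_left _ _ (by norm_num)]

end SimpleGraph

lemma one_half_le_five_sub_sqrt_five_div_four : (1 : ℝ) / 2 ≤ (5 - √5) / 4 := by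
  have h : √5 ≤ 3 := Real.sqrt_le_iff.2 ⟨by norm_num, by norm_num⟩
  linarith

lemma add_three_div_le_sub_sqrt_div {v : ℝ} (hv : 9 ≤ v) :
    (v + 3) / (2 * (v - 1)) ≤ (v - √v) / (v - 1) := by
  have h_sqrt : √v ≤ (v - 3) / 2 := Real.sqrt_le_iff.2 ⟨by linarith, by nlinarith⟩
  rw [← div_div]
  gcongr
  · linarith
  · linarith

theorem stmt_8_general {V : Type} [Fintype V] [DecidableEq V] (G : SimpleGraph V) [DecidableRel G.Adj]
    (v k a1 c2 : ℕ) (hv5 : 5 ≤ v)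
    (hk : 2 * k = v - 1) (ha1 : 4 * a1 = v - 5)
    (hsrg : G.IsSRGWith v k a1 c2) :
    cheeger G k ≤ ((v : ℝ) - Real.sqrt (v : ℝ)) / ((v : ℝ) - 1) := by
  obtain ⟨x⟩ : Nonempty V := Fintype.card_pos_iff.1 (by rw [hsrg.card]; omega)
  rcases lt_or_ge v 9 with hv9 | hv9
  · obtain ⟨rfl, rfl⟩ : v = 5 ∧ k = 2 := by omega
    calc cheeger G 2 ≤ ((2 - 1 : ℕ) : ℝ) / 2 :=
          G.cheeger_le_of_isRegularOfDegree hsrg.regular x (by norm_num) (by rw [hsrg.card]; omega)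
      _ ≤ _ := by norm_num; exact one_half_le_five_sub_sqrt_five_div_four
  · have hv9' : (9 : ℝ) ≤ v := by exact_mod_cast hv9
    have h_k : (k : ℝ) * 2 + 1 = v := by exact_mod_cast (show k * 2 + 1 = v by omega)
    have h_ka1 : ((k - a1 : ℕ) : ℝ) * 4 = v + 3 := by
      exact_mod_cast (show (k - a1) * 4 = v + 3 by omega)
    calc cheeger G k ≤ ((k - a1 : ℕ) : ℝ) / k :=
          G.cheeger_le_of_isSRGWith hsrg x (by omega) (by omega)
      _ = (v + 3) / (2 * (v - 1)) := by
          rw [div_eq_div_iff (by linarith) (by linarith)]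
          linear_combination (v - 1 : ℝ) / 2 * h_ka1 - (v + 3 : ℝ) / 2 * h_k
      _ ≤ _ := add_three_div_le_sub_sqrt_div hv9'

/-- A finite connected conference graph, i.e. a strongly regular graph with parameters
`(v, (v-1)/2, (v-5)/4, (v-1)/4)` where `v ≥ 5` and `v ≡ 1 (mod 4)`, satisfies
`h_G ≤ (v - √v)/(v - 1)`. -/
theorem stmt_8 {V : Type} [Fintype V] [DecidableEq V] (G : SimpleGraph V) [DecidableRel G.Adj]
    (v k a1 c2 : ℕ) (hv5 : 5 ≤ v) (hv4 : v % 4 = 1)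
    (hk : 2 * k = v - 1) (ha1 : 4 * a1 = v - 5) (hc2 : 4 * c2 = v - 1)
    (hsrg : G.IsSRGWith v k a1 c2) (hconn : G.Connected) :
    cheeger G k ≤ ((v : ℝ) - Real.sqrt (v : ℝ)) / ((v : ℝ) - 1) :=
  stmt_8_general G v k a1 c2 hv5 hk ha1 hsrg
end

section
/- Let q ≥ 11 be an integer and let G be a finite distance-regular graph with intersection array {q+1, q, q, q, q, q; 1, 1, 1, 1, 1, q+1} (i.e. the incidence graph of a generalized hexagon of order (q,q), a bipartite graph of diameter 6, valency q+1 and second-largest adjacency eigenvalue √(3q)). Then h_G ≤ (q + 1 − √(3q))/(q + 1). -/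
open Finset Matrix

/-- `G` is distance-regular of diameter `D` with intersection numbers `b i`, `c i`:
for every pair of vertices `x, y` at graph distance `i ≤ D`, the vertex `y` has exactly
`c i` neighbors at distance `i - 1` from `x` and exactly `b i` neighbors at distance
`i + 1` from `x`. -/
def IsDistRegular {V : Type} [Fintype V] (G : SimpleGraph V) (D : ℕ) (b c : ℕ → ℕ) : Prop :=
  ∀ i ≤ D, ∀ x y : V, G.dist x y = i →
    Nat.card {z : V | G.Adj y z ∧ G.dist x z = i - 1} = c i ∧
    Nat.card {z : V | G.Adj y z ∧ G.dist x z = i + 1} = b i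

/-!
A uniformly random `m`-subset of the vertices of a `k`-regular graph on `n` vertices has on
average `k m (n - m) / (n - 1)` edges leaving it, so taking `m = ⌊n/2⌋` gives
`h_G ≤ (n + 1) / (2 (n - 1))` for every regular graph of positive degree on `n ≥ 2` vertices.
For our graphs `c₂ = 1` forces `n ≥ (q + 1) q`, and for `q ≥ 11` this already brings
`(n + 1) / (2 (n - 1))` below `1 - √(3q) / (q + 1)`.
-/

theorem Nat.choose_succ_mul_mul_sub (n m : ℕ) :
    n.choose (m + 1) * ((m + 1) * (n - (m + 1))) = n * (n - 1) * (n - 2).choose m := by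
  obtain _ | _ | n := n
  · simp
  · simp
  have h₁ := Nat.add_one_mul_choose_eq (n + 1) m
  have h₂ := Nat.choose_mul_succ_eq n m
  simp only [Nat.add_sub_cancel, show n + 2 - (m + 1) = n + 1 - m by omega] at *
  calc (n + 2).choose (m + 1) * ((m + 1) * (n + 1 - m))
      = (n + 2) * ((n + 1).choose m * (n + 1 - m)) := by rw [← mul_assoc, ← h₁]; ring
    _ = (n + 2) * (n + 1) * n.choose m := by rw [← h₂]; ring

theorem Finset.card_filter_mem_notMem_powersetCard {α : Type*} [DecidableEq α] {s : Finset α}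
    {x y : α} (hx : x ∈ s) (hy : y ∈ s) (hxy : x ≠ y) (m : ℕ) :
    #{T ∈ s.powersetCard (m + 1) | x ∈ T ∧ y ∉ T} = (#s - 2).choose m := by
  have hcard : #((s.erase x).erase y) = #s - 2 := by
    rw [card_erase_of_mem (mem_erase.2 ⟨hxy.symm, hy⟩), card_erase_of_mem hx]; omega
  rw [← hcard, ← card_powersetCard]
  refine card_nbij' (fun T => T.erase x) (insert x) ?_ ?_ ?_ ?_
  · intro T hT
    simp only [coe_filter, mem_powersetCard, mem_coe] at hT ⊢
    obtain ⟨⟨hTs, hTcard⟩, hxT, hyT⟩ := hT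
    refine ⟨fun z hz => ?_, by rw [card_erase_of_mem hxT, hTcard]; rfl⟩
    simp only [mem_erase] at hz ⊢
    exact ⟨fun h => hyT (h ▸ hz.2), hz.1, hTs hz.2⟩
  · intro T hT
    simp only [coe_filter, mem_powersetCard, mem_coe, subset_erase] at hT ⊢
    obtain ⟨⟨⟨hTs, hxT⟩, hyT⟩, hTcard⟩ := hT
    refine ⟨⟨insert_subset hx hTs, by rw [card_insert_of_notMem hxT, hTcard]⟩,
      mem_insert_self x T, ?_⟩
    rw [mem_insert, not_or]; exact ⟨hxy.symm, hyT⟩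
  · intro T hT
    exact insert_erase (mem_filter.1 hT).2.1
  · intro T hT
    simp only [mem_coe, mem_powersetCard, subset_erase] at hT
    exact erase_insert hT.1.1.2

namespace IsDistRegular

variable {V : Type} [Fintype V] {G : SimpleGraph V} {D : ℕ} {b c : ℕ → ℕ}

theorem isRegularOfDegree [DecidableRel G.Adj] (h : IsDistRegular G D b c) :
    G.IsRegularOfDegree (b 0) := by
  intro x
  have hx := (h 0 D.zero_le x x G.dist_self).2
  have hsphere : {z | G.Adj x z ∧ G.dist x z = 0 + 1} = G.neighborSet x := by
    ext z
    simp [SimpleGraph.dist_eq_one_iff_adj]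
  rwa [hsphere, Nat.card_eq_fintype_card, G.card_neighborSet_eq_degree] at hx

/-- Since `c 2 = 1`, distinct neighbours of a vertex `x` have disjoint sets of neighbours at
distance `2` from `x`. -/
theorem mul_le_card [DecidableEq V] [DecidableRel G.Adj] [Nonempty V]
    (h : IsDistRegular G D b c) (hD : 2 ≤ D) (hc2 : c 2 = 1) :
    b 0 * b 1 ≤ Fintype.card V := by
  obtain ⟨x⟩ := ‹Nonempty V›
  let sphere₂ (y : V) : Finset V := {z | G.Adj y z ∧ G.dist x z = 2}
  have hcard (y : V) (hy : y ∈ G.neighborFinset x) : #(sphere₂ y) = b 1 := by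
    have hxy : G.dist x y = 1 := SimpleGraph.dist_eq_one_iff_adj.2 ((G.mem_neighborFinset x y).1 hy)
    rw [← (h 1 (by omega) x y hxy).2, Nat.card_eq_fintype_card, Fintype.card_subtype]
    rfl
  have hdisj : (G.neighborFinset x : Set V).PairwiseDisjoint sphere₂ := by
    intro y hy y' hy' hne
    refine disjoint_left.2 fun z hz hz' => hne ?_
    simp only [sphere₂, mem_filter, mem_univ, true_and] at hz hz'
    have hback := (h 2 hD x z hz.2).1
    rw [hc2] at hback
    have hsub : Set.Subsingleton {w | G.Adj z w ∧ G.dist x w = 2 - 1} :=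
      Set.subsingleton_coe _ |>.1 (Finite.card_le_one_iff_subsingleton.1 hback.le)
    simp only [SimpleGraph.coe_neighborFinset, SimpleGraph.mem_neighborSet] at hy hy'
    exact hsub ⟨hz.1.symm, SimpleGraph.dist_eq_one_iff_adj.2 hy⟩
      ⟨hz'.1.symm, SimpleGraph.dist_eq_one_iff_adj.2 hy'⟩
  calc b 0 * b 1 = ∑ y ∈ G.neighborFinset x, #(sphere₂ y) := by
        rw [sum_congr rfl hcard, sum_const, G.card_neighborFinset_eq_degree,
          h.isRegularOfDegree x, smul_eq_mul]
    _ = #((G.neighborFinset x).biUnion sphere₂) := (card_biUnion hdisj).symm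
    _ ≤ Fintype.card V := card_le_univ _

end IsDistRegular

namespace SimpleGraph.IsRegularOfDegree

variable {V : Type} [Fintype V] {G : SimpleGraph V} [DecidableRel G.Adj] {k : ℕ}

theorem card_filter_adj (hG : G.IsRegularOfDegree k) :
    #{p : V × V | G.Adj p.1 p.2} = Fintype.card V * k := by
  rw [← univ_product_univ, card_filter, sum_product]
  simp_rw [← card_filter, ← G.neighborFinset_eq_filter, G.card_neighborFinset_eq_degree,
    hG.degree_eq, sum_const, card_univ, smul_eq_mul]

/-- Every edge `(x, y)` leaves exactly `(n - 2).choose m` of the `(m + 1)`-subsets. -/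
theorem sum_eB_compl_powersetCard [DecidableEq V] (hG : G.IsRegularOfDegree k) (m : ℕ) :
    ∑ T ∈ univ.powersetCard (m + 1), eB G T Tᶜ
      = Fintype.card V * k * (Fintype.card V - 2).choose m := by
  have heB (T : Finset V) :
      eB G T Tᶜ =
        ∑ p ∈ {p : V × V | G.Adj p.1 p.2}, if p.1 ∈ T ∧ p.2 ∉ T then 1 else 0 := by
    rw [← card_filter, eB, filter_filter]
    congr 1
    ext p
    simp only [mem_filter, mem_product, mem_compl, mem_univ, true_and]
    tauto
  calc ∑ T ∈ univ.powersetCard (m + 1), eB G T Tᶜ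
      = ∑ p ∈ {p : V × V | G.Adj p.1 p.2},
          #{T ∈ univ.powersetCard (m + 1) | p.1 ∈ T ∧ p.2 ∉ T} := by
        simp_rw [heB, card_filter]
        exact sum_comm
    _ = ∑ p ∈ {p : V × V | G.Adj p.1 p.2}, (Fintype.card V - 2).choose m :=
        sum_congr rfl fun p hp => card_filter_mem_notMem_powersetCard (mem_univ _) (mem_univ _)
          (mem_filter.1 hp).2.ne m
    _ = Fintype.card V * k * (Fintype.card V - 2).choose m := by
        rw [sum_const, hG.card_filter_adj, smul_eq_mul]

theorem exists_card_eq_eB_compl_mul_le [DecidableEq V] (hG : G.IsRegularOfDegree k) (m : ℕ)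
    (hm : m + 1 ≤ Fintype.card V) :
    ∃ S : Finset V, #S = m + 1 ∧
      eB G S Sᶜ * (Fintype.card V - 1) ≤ k * ((m + 1) * (Fintype.card V - (m + 1))) := by
  have hsum : ∑ T ∈ univ.powersetCard (m + 1), eB G T Tᶜ * (Fintype.card V - 1)
      = ∑ _T ∈ (univ : Finset V).powersetCard (m + 1),
          k * ((m + 1) * (Fintype.card V - (m + 1))) := by
    rw [← sum_mul, hG.sum_eB_compl_powersetCard, sum_const, card_powersetCard, card_univ,
      smul_eq_mul, mul_left_comm _ k, Nat.choose_succ_mul_mul_sub]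
    ring
  obtain ⟨S, hS, hle⟩ := exists_le_of_sum_le
    (powersetCard_nonempty.2 (by rwa [card_univ])) hsum.le
  exact ⟨S, (mem_powersetCard.1 hS).2, hle⟩

theorem cheeger_le [DecidableEq V] (hG : G.IsRegularOfDegree k) (hk : 0 < k)
    (hn : 2 ≤ Fintype.card V) :
    cheeger G k ≤ ((Fintype.card V : ℝ) + 1) / (2 * ((Fintype.card V : ℝ) - 1)) := by
  obtain ⟨S, hS, hcut⟩ :=
    hG.exists_card_eq_eB_compl_mul_le (Fintype.card V / 2 - 1) (by omega)
  set n := Fintype.card V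
  rw [← hS] at hcut
  have hbdd : BddBelow {x : ℝ | ∃ T : Finset V, T.Nonempty ∧ 2 * #T ≤ n ∧
      x = (eB G T Tᶜ : ℝ) / (k * #T)} := ⟨0, by rintro x ⟨T, -, -, rfl⟩; positivity⟩
  refine (csInf_le hbdd ⟨S, card_pos.1 (by omega), by omega, rfl⟩).trans ?_
  have hcutR : (eB G S Sᶜ : ℝ) * (n - 1) ≤ k * (#S * (n - #S)) := by
    have h := (Nat.cast_le (α := ℝ)).2 hcut
    push_cast [Nat.cast_sub (show 1 ≤ n by omega), Nat.cast_sub (show #S ≤ n by omega)] at h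
    exact h
  have hS₀ : (0 : ℝ) < #S := by exact_mod_cast (show 0 < #S by omega)
  have hS₁ : (n : ℝ) ≤ 2 * #S + 1 := by exact_mod_cast (show n ≤ 2 * #S + 1 by omega)
  have hn₁ : (1 : ℝ) < n := by exact_mod_cast hn
  have hk₀ : (0 : ℝ) < k := by exact_mod_cast hk
  rw [div_le_div_iff₀ (by positivity) (by linarith)]
  nlinarith [mul_pos hk₀ hS₀]

end SimpleGraph.IsRegularOfDegree

theorem sqrt_three_mul_div_add_two_div_sq_le {q : ℝ} (hq : 11 ≤ q) :
    √(3 * q) / (q + 1) + 2 / (q + 1) ^ 2 ≤ 1 / 2 := by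
  have hsqrt : √(3 * q) ≤ ((q + 1) ^ 2 - 4) / (2 * (q + 1)) := by
    rw [Real.sqrt_le_iff, le_div_iff₀ (by positivity), div_pow, le_div_iff₀ (by positivity)]
    constructor
    · nlinarith
    · nlinarith [sq_nonneg (q - 11), sq_nonneg (q + 1)]
  calc √(3 * q) / (q + 1) + 2 / (q + 1) ^ 2
      ≤ ((q + 1) ^ 2 - 4) / (2 * (q + 1)) / (q + 1) + 2 / (q + 1) ^ 2 := by gcongr
    _ = 1 / 2 := by field_simp; ring

theorem stmt_18_general {V : Type} [Fintype V] [DecidableEq V] (G : SimpleGraph V) [DecidableRel G.Adj]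
    (q : ℕ) (hq : 11 ≤ q) (b c : ℕ → ℕ)
    (hb0 : b 0 = q + 1) (hb1 : b 1 = q)
    (hc2 : c 2 = 1)
    (hconn : G.Connected) (hdrg : IsDistRegular G 6 b c) :
    cheeger G (q + 1) ≤ ((q : ℝ) + 1 - Real.sqrt (3 * (q : ℝ))) / ((q : ℝ) + 1) := by
  have : Nonempty V := hconn.nonempty
  have hreg : G.IsRegularOfDegree (q + 1) := hb0 ▸ hdrg.isRegularOfDegree
  have hcard : (q + 1) * q ≤ Fintype.card V := hb0 ▸ hb1 ▸ hdrg.mul_le_card (by norm_num) hc2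
  have hqR : (11 : ℝ) ≤ q := by exact_mod_cast hq
  have hcardR : ((q : ℝ) + 1) * q ≤ Fintype.card V := by exact_mod_cast hcard
  have hn : 2 ≤ Fintype.card V := by nlinarith
  set n : ℝ := (Fintype.card V : ℝ)
  have hn₁ : n - 1 ≠ 0 := by nlinarith
  calc cheeger G (q + 1) ≤ (n + 1) / (2 * (n - 1)) := hreg.cheeger_le q.succ_pos hn
    _ = 1 / 2 + 1 / (n - 1) := by field_simp; ring
    _ ≤ 1 / 2 + 2 / ((q : ℝ) + 1) ^ 2 := by
        rw [add_le_add_iff_left, div_le_div_iff₀ (by nlinarith) (by positivity)]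
        nlinarith
    _ ≤ 1 - √(3 * q) / (q + 1) := by linarith [sqrt_three_mul_div_add_two_div_sq_le hqR]
    _ = ((q : ℝ) + 1 - √(3 * q)) / (q + 1) := by field_simp

/-- For `q ≥ 11`, a distance-regular graph with intersection array
`{q+1, q, q, q, q, q; 1, 1, 1, 1, 1, q+1}` (the incidence graph of a generalized hexagon
`GH(q,q)`, of diameter 6 and valency `q+1`) satisfies
`h_G ≤ (q + 1 - √(3q))/(q + 1)`. -/
theorem stmt_18 {V : Type} [Fintype V] [DecidableEq V] (G : SimpleGraph V) [DecidableRel G.Adj]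
    (q : ℕ) (hq : 11 ≤ q) (b c : ℕ → ℕ)
    (hb0 : b 0 = q + 1) (hb1 : b 1 = q) (hb2 : b 2 = q) (hb3 : b 3 = q)
    (hb4 : b 4 = q) (hb5 : b 5 = q)
    (hc1 : c 1 = 1) (hc2 : c 2 = 1) (hc3 : c 3 = 1) (hc4 : c 4 = 1)
    (hc5 : c 5 = 1) (hc6 : c 6 = q + 1)
    (hconn : G.Connected) (hdrg : IsDistRegular G 6 b c)
    (hdiam : (∀ x y : V, G.dist x y ≤ 6) ∧ ∃ x y : V, G.dist x y = 6) :
    cheeger G (q + 1) ≤ ((q : ℝ) + 1 - Real.sqrt (3 * (q : ℝ))) / ((q : ℝ) + 1) :=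
  stmt_18_general G q hq b c hb0 hb1 hc2 hconn hdrg
end
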